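/- arXiv:1009.2111 — 2 statements merged into one kernel-verified Lean document; each statement's English description precedes it below -/
import Mathlib

section
/- The rate recursion has the closed form S(ψ,r,k): for every integer k ≥ 0, ρ(k) = S(ψ,r,k). Here S(ψ,r,k) is defined as follows: if S̃₁(ψ,r) ≥ 1/2 then S(ψ,r,k) = S₁(ψ,k) for k ≤ K₁(ψ,r) and S(ψ,r,k) = r + 1/4 for k ≥ K₁(ψ,r) + 1; if S̃₁(ψ,r) < 1/2 then S(ψ,r,k) = S₁(ψ,k) for k ≤ K₁(ψ,r), S(ψ,r,k) = S₂(S̃₁(ψ,r), r, k − K₁(ψ,r)) for K₁(ψ,r) < k ≤ K₁(ψ,r) + K̃₂(ψ,r), and S(ψ,r,k) = r + 1/4 for k ≥ K₁(ψ,r) + K̃₂(ψ,r) + 1. -/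
/-!
Up to step `K₁` the rate lies below `r` and is multiplied by `3/2`, so it equals `S₁`; `K₁` is
exactly the first index at which `S₁ ≥ r`. From there, as long as the rate is in `[r, 1/2)`, the
affine map `x ↦ r + x/2` with fixed point `2r` gives `S₂`, and `K̃₂` is the first index at which
`S₂ ≥ 1/2`. Once the rate is at least `max r (1/2)` it becomes `r + 1/4`, a fixed point of the
recursion because `r > 1/4`.
-/

/-- `intLe x` is the smallest nonnegative integer `≥ x` (the paper's `int[x]`). -/
noncomputable def intLe (x : ℝ) : ℕ := sInf {k : ℕ | x ≤ (k : ℝ)}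

/-- The rate sequence `ρ` of Lemma 1: `ρ(0) = ψ` and the three-stage recursion. -/
noncomputable def rateSeq (r ψ : ℝ) : ℕ → ℝ
  | 0 => ψ
  | k + 1 =>
    if rateSeq r ψ k < r then (3 / 2) * rateSeq r ψ k
    else if rateSeq r ψ k < 1 / 2 then r + rateSeq r ψ k / 2
    else r + 1 / 4

/-- `S₁(ψ,k) = ψ (3/2)^k`. -/
noncomputable def S1 (ψ : ℝ) (k : ℕ) : ℝ := ψ * (3 / 2) ^ k

/-- `K₁(ψ,r) = int[log(r/ψ)/log(3/2)]`. -/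
noncomputable def K1 (ψ r : ℝ) : ℕ := intLe (Real.log (r / ψ) / Real.log (3 / 2))

/-- `S̃₁(ψ,r) = S₁(ψ, K₁(ψ,r))`. -/
noncomputable def S1t (ψ r : ℝ) : ℝ := S1 ψ (K1 ψ r)

/-- `S₂(x,r,k) = 2r + 2^{−k}(x − 2r)`. -/
noncomputable def S2 (x r : ℝ) (k : ℕ) : ℝ := 2 * r + ((2 : ℝ)⁻¹) ^ k * (x - 2 * r)

/-- `K₂(x,r) = int[log((2r−x)/(2r−1/2))/log 2]`. -/
noncomputable def K2 (x r : ℝ) : ℕ :=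
  intLe (Real.log ((2 * r - x) / (2 * r - 1 / 2)) / Real.log 2)

/-- `K̃₂(ψ,r) = K₂(S̃₁(ψ,r), r)`. -/
noncomputable def K2t (ψ r : ℝ) : ℕ := K2 (S1t ψ r) r

/-- The closed form `S(ψ,r,k)` from Theorem 1. -/
noncomputable def Sclosed (ψ r : ℝ) (k : ℕ) : ℝ :=
  if 1 / 2 ≤ S1t ψ r then
    (if k ≤ K1 ψ r then S1 ψ k else r + 1 / 4)
  else
    (if k ≤ K1 ψ r then S1 ψ k
     else if k ≤ K1 ψ r + K2t ψ r then S2 (S1t ψ r) r (k - K1 ψ r)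
     else r + 1 / 4)

open Real

lemma intLe_eq_ceil (x : ℝ) : intLe x = ⌈x⌉₊ :=
  le_antisymm (Nat.sInf_le (Nat.le_ceil x))
    (le_csInf ⟨_, Nat.le_ceil x⟩ fun _ hk => Nat.ceil_le.mpr hk)

lemma lt_intLe_log_div_log_iff {a c : ℝ} (ha : 1 < a) (hc : 0 < c) (k : ℕ) :
    k < intLe (log c / log a) ↔ a ^ k < c := by
  rw [intLe_eq_ceil, Nat.lt_ceil, lt_div_iff₀ (log_pos ha), ← log_pow,
    log_lt_log_iff (by positivity) hc]

section ClosedForm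

variable {r ψ x : ℝ}

lemma S1_lt_iff_lt_K1 (hr : 0 < r) (hψ : 0 < ψ) (k : ℕ) : S1 ψ k < r ↔ k < K1 ψ r := by
  rw [K1, lt_intLe_log_div_log_iff (by norm_num) (by positivity), lt_div_iff₀' hψ, S1]

lemma le_S1t (hr : 0 < r) (hψ : 0 < ψ) : r ≤ S1t ψ r :=
  le_of_not_gt fun h => lt_irrefl _ ((S1_lt_iff_lt_K1 hr hψ _).mp h)

lemma S2_lt_half_iff_lt_K2 (hr : 1 / 4 < r) (hx : x < 2 * r) (j : ℕ) :
    S2 x r j < 1 / 2 ↔ j < K2 x r := by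
  have hden : 0 < 2 * r - 1 / 2 := by linarith
  rw [K2, lt_intLe_log_div_log_iff one_lt_two (div_pos (by linarith) hden), lt_div_iff₀ hden,
    S2, inv_pow, ← mul_lt_mul_iff_right₀ (by positivity : (0 : ℝ) < 2 ^ j)]
  field_simp
  constructor <;> intro h <;> linarith

lemma half_le_S2_K2 (hr : 1 / 4 < r) (hx : x < 2 * r) : 1 / 2 ≤ S2 x r (K2 x r) :=
  le_of_not_gt fun h => lt_irrefl _ ((S2_lt_half_iff_lt_K2 hr hx _).mp h)

lemma le_S2 (hx : x ≤ 2 * r) (j : ℕ) : x ≤ S2 x r j := by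
  have h1 : (2 : ℝ)⁻¹ ^ j ≤ 1 := pow_le_one₀ (by norm_num) (by norm_num)
  rw [S2]
  nlinarith

lemma S2_zero (x r : ℝ) : S2 x r 0 = x := by
  simp [S2]

lemma S2_succ (x r : ℝ) (j : ℕ) : S2 x r (j + 1) = r + S2 x r j / 2 := by
  simp only [S2, pow_succ]
  ring

end ClosedForm

section Recursion

variable {r ψ x : ℝ} {m : ℕ}

lemma rateSeq_succ_of_lt {k : ℕ} (h : rateSeq r ψ k < r) :
    rateSeq r ψ (k + 1) = 3 / 2 * rateSeq r ψ k := by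
  rw [rateSeq, if_pos h]

lemma rateSeq_succ_of_le_of_lt {k : ℕ} (h₁ : r ≤ rateSeq r ψ k) (h₂ : rateSeq r ψ k < 1 / 2) :
    rateSeq r ψ (k + 1) = r + rateSeq r ψ k / 2 := by
  rw [rateSeq, if_neg h₁.not_gt, if_pos h₂]

lemma rateSeq_succ_of_le_of_le {k : ℕ} (h₁ : r ≤ rateSeq r ψ k) (h₂ : 1 / 2 ≤ rateSeq r ψ k) :
    rateSeq r ψ (k + 1) = r + 1 / 4 := by
  rw [rateSeq, if_neg h₁.not_gt, if_neg h₂.not_gt]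

lemma rateSeq_eq_S1 (hr : 0 < r) (hψ : 0 < ψ) {k : ℕ} (hk : k ≤ K1 ψ r) :
    rateSeq r ψ k = S1 ψ k := by
  induction k with
  | zero => simp [rateSeq, S1]
  | succ k ih =>
    have hρ := ih (by omega)
    have hlt : rateSeq r ψ k < r := hρ ▸ (S1_lt_iff_lt_K1 hr hψ k).mpr (by omega)
    rw [rateSeq_succ_of_lt hlt, hρ, S1, S1, pow_succ]
    ring

lemma rateSeq_add_eq_S2 (hr : 1 / 4 < r) (hm : rateSeq r ψ m = x) (hrx : r ≤ x) (hx : x < 2 * r)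
    {j : ℕ} (hj : j ≤ K2 x r) : rateSeq r ψ (m + j) = S2 x r j := by
  induction j with
  | zero => rw [Nat.add_zero, hm, S2_zero]
  | succ j ih =>
    have hρ := ih (by omega)
    have hlt : rateSeq r ψ (m + j) < 1 / 2 := hρ ▸ (S2_lt_half_iff_lt_K2 hr hx j).mpr (by omega)
    have hle : r ≤ rateSeq r ψ (m + j) := hρ ▸ hrx.trans (le_S2 hx.le j)
    rw [← Nat.add_assoc, rateSeq_succ_of_le_of_lt hle hlt, hρ, S2_succ]

lemma rateSeq_add_succ_eq (hr : 1 / 4 ≤ r) (h₁ : r ≤ rateSeq r ψ m) (h₂ : 1 / 2 ≤ rateSeq r ψ m)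
    (j : ℕ) : rateSeq r ψ (m + j + 1) = r + 1 / 4 := by
  induction j with
  | zero => exact rateSeq_succ_of_le_of_le h₁ h₂
  | succ j ih =>
    rw [← Nat.add_assoc, rateSeq_succ_of_le_of_le (by linarith) (by linarith)]

end Recursion

theorem rateSeq_eq_Sclosed_general (r ψ : ℝ) (hr1 : 1 / 4 < r)
    (hψ1 : 0 < ψ) (k : ℕ) :
    rateSeq r ψ k = Sclosed ψ r k := by
  have hr0 : 0 < r := by linarith
  have hrS : r ≤ S1t ψ r := le_S1t hr0 hψ1
  have hK1 : rateSeq r ψ (K1 ψ r) = S1t ψ r := rateSeq_eq_S1 hr0 hψ1 le_rfl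
  unfold Sclosed
  split_ifs with hhalf hk hk hk₂
  · exact rateSeq_eq_S1 hr0 hψ1 hk
  · obtain ⟨j, rfl⟩ : ∃ j, k = K1 ψ r + j + 1 := ⟨k - K1 ψ r - 1, by omega⟩
    exact rateSeq_add_succ_eq hr1.le (hK1 ▸ hrS) (hK1 ▸ hhalf) j
  · exact rateSeq_eq_S1 hr0 hψ1 hk
  · have hx : S1t ψ r < 2 * r := by linarith
    obtain ⟨j, rfl⟩ : ∃ j, k = K1 ψ r + j := ⟨k - K1 ψ r, by omega⟩
    rw [Nat.add_sub_cancel_left]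
    exact rateSeq_add_eq_S2 hr1 hK1 hrS hx (by unfold K2t at hk₂; omega)
  · have hx : S1t ψ r < 2 * r := by linarith
    have hK2 : rateSeq r ψ (K1 ψ r + K2t ψ r) = S2 (S1t ψ r) r (K2t ψ r) :=
      rateSeq_add_eq_S2 hr1 hK1 hrS hx le_rfl
    obtain ⟨j, rfl⟩ : ∃ j, k = K1 ψ r + K2t ψ r + j + 1 := ⟨k - (K1 ψ r + K2t ψ r) - 1, by omega⟩
    exact rateSeq_add_succ_eq hr1.le (hK2 ▸ hrS.trans (le_S2 hx.le _))
      (hK2 ▸ half_le_S2_K2 hr1 hx) j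

/-- For `1/4 < r ≤ 1/2` and `0 < ψ ≤ 1/2`, the rate recursion has the
closed form `S(ψ,r,k)`: for every `k ≥ 0`, `ρ(k) = S(ψ,r,k)`. -/
theorem rateSeq_eq_Sclosed (r ψ : ℝ) (hr1 : 1 / 4 < r) (hr2 : r ≤ 1 / 2)
    (hψ1 : 0 < ψ) (hψ2 : ψ ≤ 1 / 2) (k : ℕ) :
    rateSeq r ψ k = Sclosed ψ r k :=
  rateSeq_eq_Sclosed_general r ψ hr1 hψ1 k
end

section
/- (Quadratic form moment identities from the proof of Lemma A.6.) Let A be a deterministic symmetric n×n real matrix. Then for every index i, E[(WᵀAW)_{ii}] = Σ_{ii}·tr(A); and for all indices i ≠ j, E[ ((WᵀAW)_{ij})² ] = (Σ_{ij})²·(tr A)² + (Σ_{ii}Σ_{jj} + (Σ_{ij})²)·tr(A²) + ( E[(W_{1i}W_{1j})²] − 2(Σ_{ij})² − Σ_{ii}Σ_{jj} )·Σ_{r=1}^{n} A_{rr}². -/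
/-!
Expanding the quadratic form, both moments become `A`-weighted sums of the moments
`E[W_{li} W_{mi}]` and `E[W_{li} W_{mj} W_{l'i} W_{m'j}]`. Independence and identical distribution
of the rows factor such a moment into a product, over the rows `r`, of mixed moments
`E[W_{0i}^a W_{0j}^b]` of a single row, where `a` and `b` count how often `r` occurs among the
indices. First moments vanish, so only the index patterns in which no row occurs exactly once
survive: the three pairings `l = m, l' = m'`, `l = l', m = m'`, `l = m', m = l'`, with a correction
on the full diagonal where they overlap. Summed against `A ⊗ A` they give `(tr A)²`,
`tr(A Aᵀ) = tr(A²)` and `∑ A_rr²`.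
-/

open MeasureTheory ProbabilityTheory Finset Matrix
open scoped ENNReal

instance ENNReal.HolderTriple.instFourFourTwo : ENNReal.HolderTriple (4 : ℝ≥0∞) 4 2 where
  inv_add_inv_eq_inv := by
    rw [show (4 : ℝ≥0∞) = 2 * 2 by norm_num, ENNReal.mul_inv (by simp) (by simp), ← mul_add,
      ENNReal.inv_two_add_inv_two, mul_one]

section Integrability

variable {Ω : Type*} [MeasurableSpace Ω] {μ : Measure Ω}

lemma MeasureTheory.memLp_four_of_integrable_pow_four {X : Ω → ℝ}
    (hX : AEStronglyMeasurable X μ) (h : Integrable (fun ω => X ω ^ 4) μ) : MemLp X 4 μ := by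
  rw [← integrable_norm_rpow_iff hX (by norm_num) (by norm_num)]
  convert h using 2 with ω
  rw [Real.norm_eq_abs, show (4 : ℝ≥0∞).toReal = ((4 : ℕ) : ℝ) by norm_num, Real.rpow_natCast,
    Even.pow_abs ⟨2, rfl⟩]

lemma MeasureTheory.MemLp.integrable_mul_of_four [IsFiniteMeasure μ] {X Y : Ω → ℝ}
    (hX : MemLp X 4 μ) (hY : MemLp Y 4 μ) : Integrable (fun ω => X ω * Y ω) μ :=
  (hX.mono_exponent (p := 2) (by norm_num)).integrable_mul
    (hY.mono_exponent (p := 2) (by norm_num))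

lemma MeasureTheory.MemLp.integrable_mul_mul_mul {X₁ X₂ X₃ X₄ : Ω → ℝ} (h₁ : MemLp X₁ 4 μ)
    (h₂ : MemLp X₂ 4 μ) (h₃ : MemLp X₃ 4 μ) (h₄ : MemLp X₄ 4 μ) :
    Integrable (fun ω => X₁ ω * X₂ ω * (X₃ ω * X₄ ω)) μ :=
  (h₂.mul' h₁ : MemLp _ 2 μ).integrable_mul (h₄.mul' h₃ : MemLp _ 2 μ)

end Integrability

section QuadraticForm

variable {Ω ι : Type*} [MeasurableSpace Ω] {μ : Measure Ω} [Fintype ι] {X Y : ι → Ω → ℝ}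

lemma integral_sum_sum_mul_mul (A : ι → ι → ℝ)
    (hXY : ∀ l m, Integrable (fun ω => X l ω * Y m ω) μ) :
    ∫ ω, ∑ l, ∑ m, X l ω * A l m * Y m ω ∂μ = ∑ l, ∑ m, A l m * ∫ ω, X l ω * Y m ω ∂μ := by
  have hform : ∀ ω, ∑ l, ∑ m, X l ω * A l m * Y m ω = ∑ l, ∑ m, A l m * (X l ω * Y m ω) :=
    fun ω => by simp only [mul_comm, mul_left_comm]
  simp only [hform]
  rw [integral_finsetSum _ fun l _ => integrable_finsetSum _ fun m _ => (hXY l m).const_mul _]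
  refine sum_congr rfl fun l _ => ?_
  rw [integral_finsetSum _ fun m _ => (hXY l m).const_mul _]
  simp only [integral_const_mul]

lemma integral_sq_sum_sum_mul_mul (A : ι → ι → ℝ)
    (hXY : ∀ l m l' m', Integrable (fun ω => X l ω * Y m ω * (X l' ω * Y m' ω)) μ) :
    ∫ ω, (∑ l, ∑ m, X l ω * A l m * Y m ω) ^ 2 ∂μ =
      ∑ l, ∑ m, ∑ l', ∑ m', A l m * A l' m' * ∫ ω, X l ω * Y m ω * (X l' ω * Y m' ω) ∂μ := by
  have hexpand : ∀ ω, (∑ l, ∑ m, X l ω * A l m * Y m ω) ^ 2 =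
      ∑ l, ∑ m, ∑ l', ∑ m', A l m * A l' m' * (X l ω * Y m ω * (X l' ω * Y m' ω)) := fun ω => by
    simp only [sq, sum_mul_sum]
    refine sum_congr rfl fun l _ => ?_
    rw [sum_comm]
    simp only [mul_comm, mul_left_comm]
  simp only [hexpand]
  rw [integral_finsetSum _ fun l _ => integrable_finsetSum _ fun m _ =>
    integrable_finsetSum _ fun l' _ => integrable_finsetSum _ fun m' _ =>
      (hXY l m l' m').const_mul _]
  refine sum_congr rfl fun l _ => ?_
  rw [integral_finsetSum _ fun m _ => integrable_finsetSum _ fun l' _ =>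
    integrable_finsetSum _ fun m' _ => (hXY l m l' m').const_mul _]
  refine sum_congr rfl fun m _ => ?_
  rw [integral_finsetSum _ fun l' _ => integrable_finsetSum _ fun m' _ =>
    (hXY l m l' m').const_mul _]
  refine sum_congr rfl fun l' _ => ?_
  rw [integral_finsetSum _ fun m' _ => (hXY l m l' m').const_mul _]
  simp only [integral_const_mul]

end QuadraticForm

section Pairings

variable {ι : Type*} [Fintype ι] [DecidableEq ι]

def pairingWeight (s c k : ℝ) (l m l' m' : ι) : ℝ :=
  (if l = m ∧ l' = m' then s else 0) + (if l = l' ∧ m = m' then c else 0) +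
    (if l = m' ∧ m = l' then s else 0) + (if l = m ∧ m = l' ∧ l' = m' then k else 0)

lemma sum_mul_mul_pairingWeight (A : Matrix ι ι ℝ) (s c k : ℝ) :
    ∑ l, ∑ m, ∑ l', ∑ m', A l m * A l' m' * pairingWeight s c k l m l' m' =
      s * A.trace ^ 2 + c * (A * Aᵀ).trace + s * (A * A).trace + k * ∑ r, A r r ^ 2 := by
  simp only [pairingWeight, mul_add, sum_add_distrib, mul_ite, mul_zero, ite_and, sum_ite_irrel,
    sum_ite_eq, mem_univ, if_true, sum_const_zero, trace, diag_apply, sq, mul_sum, sum_mul,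
    Matrix.mul_apply, transpose_apply, mul_comm s, mul_comm c, mul_comm k]
  rw [sum_comm (f := fun x i => A i i * A x x * s)]

def pairCount (u v r : ι) : ℕ := (if u = r then 1 else 0) + (if v = r then 1 else 0)

lemma prod_pairCount_eq_pairingWeight {g : ℕ → ℕ → ℝ} (h00 : g 0 0 = 1) (h10 : g 1 0 = 0)
    (h01 : g 0 1 = 0) (l m l' m' : ι) :
    ∏ r, g (pairCount l l' r) (pairCount m m' r) =
      pairingWeight (g 1 1 ^ 2) (g 2 0 * g 0 2) (g 2 2 - 2 * g 1 1 ^ 2 - g 2 0 * g 0 2)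
        l m l' m' := by
  -- only the rows `l, m, l', m'` carry a factor other than `g 0 0 = 1`
  rw [← prod_subset (subset_univ {l, m, l', m'}) fun r _ hr => by
    simp only [mem_insert, mem_singleton, not_or] at hr
    simp [pairCount, Ne.symm hr.1, Ne.symm hr.2.1, Ne.symm hr.2.2.1, Ne.symm hr.2.2.2, h00]]
  by_cases hlm : l = m <;> by_cases hll' : l = l' <;> by_cases hlm' : l = m' <;>
    by_cases hml' : m = l' <;> by_cases hmm' : m = m' <;> by_cases hl'm' : l' = m' <;>
    subst_vars <;> simp_all [pairingWeight, pairCount, prod_insert, eq_comm] <;> ring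

end Pairings

noncomputable def mixedMoment {Ω κ : Type*} [MeasurableSpace Ω] (μ : Measure Ω)
    (X : Ω → κ → ℝ) (i j : κ) (a b : ℕ) : ℝ :=
  ∫ ω, X ω i ^ a * X ω j ^ b ∂μ

section IIDRows

variable {Ω ι κ : Type*} [MeasurableSpace Ω] {μ : Measure Ω} {W : ι → Ω → κ → ℝ}

lemma integral_prod_rows [Fintype ι] (hmeas : ∀ l, Measurable (W l)) (hindep : iIndepFun W μ)
    {l₀ : ι} (hident : ∀ l, IdentDistrib (W l) (W l₀) μ μ) {f : ι → (κ → ℝ) → ℝ}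
    (hf : ∀ l, Measurable (f l)) :
    ∫ ω, ∏ l, f l (W l ω) ∂μ = ∏ l, ∫ ω, f l (W l₀ ω) ∂μ := by
  rw [hindep.integral_fun_prod_comp (fun l => (hmeas l).aemeasurable)
    (fun l => (hf l).aestronglyMeasurable)]
  exact prod_congr rfl fun l _ => ((hident l).comp (hf l)).integral_eq

lemma integral_mul_rows [DecidableEq ι] (hmeas : ∀ l, Measurable (W l))
    (hindep : iIndepFun W μ) {i j : κ} (hmean : ∀ l, ∫ ω, W l ω i ∂μ = 0) {c : ℝ}
    (hcov : ∀ l, ∫ ω, W l ω i * W l ω j ∂μ = c) (l m : ι) :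
    ∫ ω, W l ω i * W m ω j ∂μ = if l = m then c else 0 := by
  split_ifs with hlm
  · rw [hlm, hcov]
  have hind : IndepFun (fun ω => W l ω i) (fun ω => W m ω j) μ :=
    (hindep.indepFun hlm).comp (measurable_pi_apply i) (measurable_pi_apply j)
  rw [hind.integral_fun_mul_eq_mul_integral ((hmeas l).eval).aestronglyMeasurable
    ((hmeas m).eval).aestronglyMeasurable, hmean, zero_mul]

lemma integral_mul_mul_rows [Fintype ι] [DecidableEq ι] [IsProbabilityMeasure μ]
    (hmeas : ∀ l, Measurable (W l)) (hindep : iIndepFun W μ) {l₀ : ι}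
    (hident : ∀ l, IdentDistrib (W l) (W l₀) μ μ) (hmean : ∀ i, ∫ ω, W l₀ ω i ∂μ = 0)
    (i j : κ) (l m l' m' : ι) :
    ∫ ω, W l ω i * W m ω j * (W l' ω i * W m' ω j) ∂μ =
      let g := mixedMoment μ (W l₀) i j
      pairingWeight (g 1 1 ^ 2) (g 2 0 * g 0 2) (g 2 2 - 2 * g 1 1 ^ 2 - g 2 0 * g 0 2)
        l m l' m' := by
  have hprod : ∀ ω, W l ω i * W m ω j * (W l' ω i * W m' ω j) =
      ∏ r, W r ω i ^ pairCount l l' r * W r ω j ^ pairCount m m' r := fun ω => by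
    simp only [pairCount, pow_add, prod_mul_distrib, prod_pow_boole, mem_univ, if_true]
    ring
  simp only [hprod]
  rw [integral_prod_rows (f := fun r x => x i ^ pairCount l l' r * x j ^ pairCount m m' r)
    hmeas hindep hident fun r => by fun_prop]
  exact prod_pairCount_eq_pairingWeight (g := mixedMoment μ (W l₀) i j)
    (by simp [mixedMoment]) (by simp [mixedMoment, hmean]) (by simp [mixedMoment, hmean]) ..

end IIDRows

/-- Let the rows `W 0, …, W (n−1)` of `W` be i.i.d. mean-zero random
vectors in `ℝ^d` with covariance `Σ'` and finite fourth moments, and let `A` be a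
deterministic symmetric `n×n` matrix. Then `E[(WᵀAW)_{ii}] = Σ'_{ii}·tr A`, and for
`i ≠ j`, `E[((WᵀAW)_{ij})²] = (Σ'_{ij})²(tr A)² + (Σ'_{ii}Σ'_{jj} + (Σ'_{ij})²) tr(A²)
+ (E[(W_{1i}W_{1j})²] − 2(Σ'_{ij})² − Σ'_{ii}Σ'_{jj}) Σ_r A_{rr}²`. -/
theorem quadratic_form_moments
    {Ω : Type*} [MeasurableSpace Ω] {μ : Measure Ω} [IsProbabilityMeasure μ]
    (n d : ℕ) (hn : 0 < n) (W : Fin n → Ω → (Fin d → ℝ))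
    (hmeas : ∀ l, Measurable (W l))
    (hindep : iIndepFun W μ)
    (hident : ∀ l l', IdentDistrib (W l) (W l') μ μ)
    (hmean : ∀ l i, ∫ ω, W l ω i ∂μ = 0)
    (Sig : Matrix (Fin d) (Fin d) ℝ)
    (hSig : ∀ l i j, Sig i j = ∫ ω, W l ω i * W l ω j ∂μ)
    (h4 : ∀ l i, Integrable (fun ω => (W l ω i) ^ 4) μ)
    (A : Matrix (Fin n) (Fin n) ℝ) (hA : A.IsSymm) :
    (∀ i : Fin d,
      ∫ ω, (∑ l, ∑ m, W l ω i * A l m * W m ω i) ∂μ = Sig i i * A.trace) ∧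
    (∀ i j : Fin d, i ≠ j →
      ∫ ω, (∑ l, ∑ m, W l ω i * A l m * W m ω j) ^ 2 ∂μ =
        (Sig i j) ^ 2 * A.trace ^ 2 +
        (Sig i i * Sig j j + (Sig i j) ^ 2) * (A * A).trace +
        ((∫ ω, (W ⟨0, hn⟩ ω i * W ⟨0, hn⟩ ω j) ^ 2 ∂μ)
            - 2 * (Sig i j) ^ 2 - Sig i i * Sig j j) * ∑ r, (A r r) ^ 2) := by
  have hL4 : ∀ l i, MemLp (fun ω => W l ω i) 4 μ := fun l i =>
    memLp_four_of_integrable_pow_four ((hmeas l).eval).aestronglyMeasurable (h4 l i)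
  refine ⟨fun i => ?_, fun i j _ => ?_⟩
  · rw [integral_sum_sum_mul_mul A fun l m => (hL4 l i).integrable_mul_of_four (hL4 m i)]
    simp [integral_mul_rows hmeas hindep (hmean · i) fun l => (hSig l i i).symm, trace, mul_sum,
      mul_comm]
  · rw [integral_sq_sum_sum_mul_mul A fun l m l' m' =>
      (hL4 l i).integrable_mul_mul_mul (hL4 m j) (hL4 l' i) (hL4 m' j)]
    simp only [integral_mul_mul_rows hmeas hindep (fun l => hident l ⟨0, hn⟩) (hmean ⟨0, hn⟩)]
    rw [sum_mul_mul_pairingWeight, hA.eq]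
    set g := mixedMoment μ (W ⟨0, hn⟩) i j
    have h11 : g 1 1 = Sig i j := by simp [g, mixedMoment, hSig ⟨0, hn⟩ i j]
    have h20 : g 2 0 = Sig i i := by simp [g, mixedMoment, hSig ⟨0, hn⟩ i i, sq]
    have h02 : g 0 2 = Sig j j := by simp [g, mixedMoment, hSig ⟨0, hn⟩ j j, sq]
    have h22 : g 2 2 = ∫ ω, (W ⟨0, hn⟩ ω i * W ⟨0, hn⟩ ω j) ^ 2 ∂μ := by
      simp [g, mixedMoment, mul_pow]
    rw [h11, h20, h02, h22]
    ring
end
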